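/- Let S be a good local semigroup in ℕ^n with conductor C and γ = C − 1 (componentwise). Then the canonical ideal K(S) = { a ∈ ℤ^n : Δ^S(γ − a) = ∅ } satisfies K(S) ⊆ ℕ^n and has conductor equal to C. -/
import Mathlib


/-- Componentwise coercion from `ℕ^n` to `ℤ^n`. -/
def coeV {n : ℕ} (a : Fin n → ℕ) : Fin n → ℤ := fun i => (a i : ℤ)

/-- A good semigroup of `ℕ^n`: a submonoid satisfying (G1), (G2), (G3). -/
def IsGoodSemigroup {n : ℕ} (S : Set (Fin n → ℕ)) : Prop :=
  0 ∈ S ∧ (∀ a ∈ S, ∀ b ∈ S, a + b ∈ S) ∧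
  (∀ a ∈ S, ∀ b ∈ S, a ⊓ b ∈ S) ∧
  (∀ a ∈ S, ∀ b ∈ S, ∀ i, a i = b i →
    ∃ c ∈ S, a i < c i ∧ (∀ j, j ≠ i → min (a j) (b j) ≤ c j) ∧
      (∀ j, j ≠ i → a j ≠ b j → c j = min (a j) (b j))) ∧
  (∃ C, ∀ x, C ≤ x → x ∈ S)

/-- `C` is the conductor of `S ⊆ ℕ^n`. -/
def IsConductor {n : ℕ} (S : Set (Fin n → ℕ)) (C : Fin n → ℕ) : Prop :=
  (∀ x, C ≤ x → x ∈ S) ∧ ∀ C', (∀ x, C' ≤ x → x ∈ S) → C ≤ C'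

/-- `S` is local: its only element on the axes is `0`. -/
def IsLocal {n : ℕ} (S : Set (Fin n → ℕ)) : Prop :=
  ∀ a ∈ S, (∃ i, a i = 0) → a = 0

/-- `Δ^S(x)`: elements of `S` agreeing with `x` in one coordinate and strictly above
`x` in all other coordinates. -/
def DeltaS {n : ℕ} (S : Set (Fin n → ℕ)) (x : Fin n → ℤ) : Set (Fin n → ℤ) :=
  {y | (∃ s ∈ S, coeV s = y) ∧ ∃ i, y i = x i ∧ ∀ j, j ≠ i → x j < y j}

/-- The canonical ideal `K(S) = { a ∈ ℤ^n : Δ^S(γ - a) = ∅ }` where `γ = C - 1`. -/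
def canonicalIdeal {n : ℕ} (S : Set (Fin n → ℕ)) (C : Fin n → ℕ) : Set (Fin n → ℤ) :=
  {a | DeltaS S (coeV C - 1 - a) = ∅}

/-- `C` is the conductor of `E ⊆ ℤ^n`. -/
def IsConductorZ {n : ℕ} (E : Set (Fin n → ℤ)) (c : Fin n → ℤ) : Prop :=
  (∀ x, c ≤ x → x ∈ E) ∧ ∀ c', (∀ x, c' ≤ x → x ∈ E) → c ≤ c'

theorem canonicalIdeal_subset_nonneg_and_conductor {n : ℕ} (S : Set (Fin n → ℕ))
    (hS : IsGoodSemigroup S) (hloc : IsLocal S)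
    (C : Fin n → ℕ) (hC : IsConductor S C) :
    (∀ a ∈ canonicalIdeal S C, 0 ≤ a) ∧ IsConductorZ (canonicalIdeal S C) (coeV C) := by
  obtain ⟨hzero, -⟩ := hS
  obtain ⟨hCmem, hCmin⟩ := hC
  refine ⟨?_, ?_, ?_⟩
  · -- nonnegativity
    intro a ha
    simp only [canonicalIdeal, Set.mem_setOf_eq] at ha
    by_contra hneg
    rw [Pi.le_def] at hneg
    push_neg at hneg
    obtain ⟨i, hi⟩ := hneg
    simp only [Pi.zero_apply, not_le] at hi
    set s : Fin n → ℕ := fun j =>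
      if j = i then ((C i : ℤ) - 1 - a i).toNat else max (C j) ((C j : ℤ) - a j).toNat with hs
    have hsS : s ∈ S := by
      apply hCmem
      intro j
      simp only [hs]
      split_ifs with hj
      · subst hj; omega
      · exact le_max_left _ _
    have hmem : coeV s ∈ DeltaS S (coeV C - 1 - a) := by
      refine ⟨⟨s, hsS, rfl⟩, i, ?_, ?_⟩
      · simp only [coeV, hs, if_pos rfl, Pi.sub_apply, Pi.one_apply]
        omega
      · intro j hj
        simp only [coeV, hs, if_neg hj, Pi.sub_apply, Pi.one_apply]
        push_cast
        omega
    rw [ha] at hmem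
    exact hmem
  · -- every x ≥ C is in K
    intro x hx
    simp only [canonicalIdeal, Set.mem_setOf_eq]
    rw [Set.eq_empty_iff_forall_notMem]
    rintro y ⟨⟨s, hsS, rfl⟩, i, hyi, -⟩
    have h2 := hx i
    simp only [coeV, Pi.sub_apply, Pi.one_apply] at hyi h2
    omega
  · -- minimality
    intro c' hc'
    rw [Pi.le_def]
    intro i
    by_contra hlt
    push_neg at hlt
    set a : Fin n → ℤ := fun j =>
      if j = i then (C i : ℤ) - 1 else max (C j : ℤ) (c' j) with haeq
    have haK : a ∈ canonicalIdeal S C := by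
      apply hc'
      intro j
      simp only [haeq]
      split_ifs with hj
      · subst hj
        have hlt' : c' j < (C j : ℤ) := hlt
        omega
      · exact le_max_right _ _
    simp only [canonicalIdeal, Set.mem_setOf_eq] at haK
    have hmem : coeV (0 : Fin n → ℕ) ∈ DeltaS S (coeV C - 1 - a) := by
      refine ⟨⟨0, hzero, rfl⟩, i, ?_, ?_⟩
      · show ((0:ℕ):ℤ) = (C i : ℤ) - 1 - a i
        simp only [haeq, if_pos rfl]
        omega
      · intro j hj
        show (C j : ℤ) - 1 - a j < ((0:ℕ):ℤ)
        simp only [haeq, if_neg hj]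
        have := le_max_left ((C j : ℤ)) (c' j)
        omega
    rw [haK] at hmem
    exact hmem
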